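/- For every vertex-arrival online algorithm A and every integer n ≥ 2, there exists an input sequence σ of length n such that the graph G(σ) has a vertex cover of size at most 1, and if the output set S(A,σ) is a vertex cover of G(σ) then |S(A,σ)| ≥ n−1. -/

import Mathlib

/-- `C` is a vertex cover of `G`: every edge of `G` has at least one endpoint
in `C`. -/
def IsVertexCoverF {V : Type*} (G : SimpleGraph V) (C : Finset V) : Prop :=
  ∀ u v : V, G.Adj u v → u ∈ C ∨ v ∈ C

/-- The graph determined by a vertex-arrival input sequence `σ = (N₁, …, Nₙ)`
(here 0-indexed: `σ i ⊆ {0, …, i−1}`): vertices `i` and `j` are adjacent iff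
one of them is in the neighborhood list of the other. -/
def arrivalGraph {n : ℕ} (σ : Fin n → Finset (Fin n)) : SimpleGraph (Fin n) :=
  SimpleGraph.fromRel (fun i j => i ∈ σ j)

/-- The output of the online algorithm `A` on the input sequence `σ`: the set of
vertices `i` accepted by `A` when shown the prefix `(N₁, …, Nᵢ)`. -/
def outputSet {n : ℕ} (A : ∀ m : ℕ, List (Finset (Fin m)) → Bool)
    (σ : Fin n → Finset (Fin n)) : Finset (Fin n) :=
  Finset.univ.filter fun i => A n ((List.ofFn σ).take (i.val + 1)) = true

/-- If the first `k+1` neighborhoods are empty, the prefix of length `k+1`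
is a replicate of `∅`. -/
lemma take_ofFn_eq_replicate {n : ℕ} (σ : Fin n → Finset (Fin n)) (k : ℕ)
    (hk : k < n) (h : ∀ j : Fin n, j.val ≤ k → σ j = ∅) :
    (List.ofFn σ).take (k + 1) = List.replicate (k + 1) (∅ : Finset (Fin n)) := by
  apply List.ext_getElem
  · simp [Nat.min_eq_left (Nat.succ_le_of_lt hk)]
  · intro m h1 h2
    have hm : m ≤ k := by
      simp only [List.length_take, List.length_ofFn] at h1
      omega
    have hmn : m < n := lt_of_le_of_lt hm hk
    simp only [List.getElem_take, List.getElem_ofFn, List.getElem_replicate]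
    exact h ⟨m, hmn⟩ hm

/-- Adversary lower bound for Vertex Cover in the standard vertex-arrival model:
for every online algorithm `A` and every `n ≥ 2` there is an input sequence `σ`
of length `n` such that `G(σ)` has a vertex cover of size at most `1`, while if
the output of `A` is a vertex cover of `G(σ)` then it has at least `n − 1`
vertices. -/
theorem vertexCover_standard_lower_bound
    (A : ∀ m : ℕ, List (Finset (Fin m)) → Bool) (n : ℕ) (hn : 2 ≤ n) :
    ∃ σ : Fin n → Finset (Fin n),
      (∀ i : Fin n, ∀ j ∈ σ i, j < i) ∧
      (∃ C : Finset (Fin n), IsVertexCoverF (arrivalGraph σ) C ∧ C.card ≤ 1) ∧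
      (IsVertexCoverF (arrivalGraph σ) (outputSet A σ) →
        n - 1 ≤ (outputSet A σ).card) := by
  by_cases h : ∃ m, m < n ∧ A n (List.replicate (m + 1) (∅ : Finset (Fin n))) = false
  · -- the algorithm rejects some vertex when shown only empty neighborhoods
    set r := Nat.find h with hr
    obtain ⟨hrn, hrA⟩ := Nat.find_spec h
    have hmin : ∀ m, m < r → A n (List.replicate (m + 1) (∅ : Finset (Fin n))) = true := by
      intro m hm
      have := Nat.find_min h hm
      have hmn : m < n := lt_trans hm hrn
      rcases Bool.eq_false_or_eq_true (A n (List.replicate (m + 1) (∅ : Finset (Fin n)))) with ht | hf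
      · exact ht
      · exact absurd ⟨hmn, hf⟩ this
    let rv : Fin n := ⟨r, hrn⟩
    refine ⟨fun i => if r < i.val then {rv} else ∅, ?_, ?_, ?_⟩
    · intro i j hj
      by_cases hc : r < i.val
      · simp only [hc, if_pos] at hj
        have : j = rv := Finset.mem_singleton.mp hj
        subst this
        exact hc
      · simp [hc] at hj
    · refine ⟨{rv}, ?_, by simp⟩
      intro u v huv
      rcases huv with ⟨hne, hrel | hrel⟩
      · left
        by_cases hc : r < v.val
        · simp only [hc, if_pos] at hrel
          simpa using hrel
        · simp [hc] at hrel
      · right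
        by_cases hc : r < u.val
        · simp only [hc, if_pos] at hrel
          simpa using hrel
        · simp [hc] at hrel
    · intro hcov
      set σ : Fin n → Finset (Fin n) := fun i => if r < i.val then {rv} else ∅ with hσ
      have hprefix : ∀ k, k ≤ r →
          (List.ofFn σ).take (k + 1) = List.replicate (k + 1) (∅ : Finset (Fin n)) := by
        intro k hk
        apply take_ofFn_eq_replicate _ _ (lt_of_le_of_lt hk hrn)
        intro j hj
        have : ¬ r < j.val := by omega
        simp [hσ, this]
      have hrout : rv ∉ outputSet A σ := by
        simp only [outputSet, Finset.mem_filter, Finset.mem_univ, true_and]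
        rw [hprefix r le_rfl]
        simp [hrA]
        exact hrA
      have hsub : Finset.univ.erase rv ⊆ outputSet A σ := by
        intro i hi
        have hine : i ≠ rv := (Finset.mem_erase.mp hi).1
        rcases lt_trichotomy i.val r with hlt | heq | hgt
        · simp only [outputSet, Finset.mem_filter, Finset.mem_univ, true_and]
          rw [hprefix i.val (le_of_lt hlt)]
          exact hmin i.val hlt
        · exact absurd (Fin.ext heq) hine
        · have hadj : (arrivalGraph σ).Adj rv i := by
            refine ⟨fun hc => hine (hc.symm), Or.inl ?_⟩
            simp [hσ, hgt]
          rcases hcov rv i hadj with hc | hc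
          · exact absurd hc hrout
          · exact hc
      calc n - 1 = (Finset.univ.erase rv).card := by
              rw [Finset.card_erase_of_mem (Finset.mem_univ rv), Finset.card_univ, Fintype.card_fin]
        _ ≤ (outputSet A σ).card := Finset.card_le_card hsub
  · -- the algorithm always accepts on empty neighborhoods
    push_neg at h
    refine ⟨fun _ => ∅, by simp, ⟨∅, ?_, by simp⟩, ?_⟩
    · intro u v huv
      rcases huv with ⟨_, hrel | hrel⟩ <;> simp at hrel
    · intro _
      have : outputSet A (fun _ => (∅ : Finset (Fin n))) = Finset.univ := by
        ext i
        simp only [outputSet, Finset.mem_filter, Finset.mem_univ, true_and, iff_true]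
        rw [take_ofFn_eq_replicate _ i.val i.isLt (fun _ _ => rfl)]
        have := h (i.val) i.isLt
        rcases Bool.eq_false_or_eq_true (A n (List.replicate (i.val + 1) (∅ : Finset (Fin n)))) with ht | hf
        · exact ht
        · exact absurd hf this
      rw [this, Finset.card_univ, Fintype.card_fin]
      omega
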